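/- If G and H are terminating impartial games with Γ₀(G) = Γ₀(H), then for every terminating game X, the ordinal sums X : G and X : H have equal Grundy numbers: Γ₀(X : G) = Γ₀(X : H). -/

import Mathlib

universe u

/-- Combinatorial games (removed from Mathlib; restated with the December 2024 definition). -/
inductive SetTheory.PGame : Type (u + 1)
  | mk : ∀ α β : Type u, (α → SetTheory.PGame) → (β → SetTheory.PGame) → SetTheory.PGame

namespace SetTheory.PGame

def LeftMoves : PGame → Type u
  | mk l _ _ _ => l

def RightMoves : PGame → Type u
  | mk _ r _ _ => r

def moveLeft : ∀ g : PGame, LeftMoves g → PGame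
  | mk _ _ L _ => L

def moveRight : ∀ g : PGame, RightMoves g → PGame
  | mk _ _ _ R => R

inductive IsOption : PGame → PGame → Prop
  | moveLeft {x : PGame} (i : x.LeftMoves) : IsOption (x.moveLeft i) x
  | moveRight {x : PGame} (i : x.RightMoves) : IsOption (x.moveRight i) x

theorem wf_isOption : WellFounded IsOption :=
  ⟨fun x => by
    induction x with
    | mk l r L R IHl IHr =>
      refine Acc.intro _ fun y h => ?_
      cases h with
      | moveLeft i => exact IHl i
      | moveRight j => exact IHr j⟩

instance le : LE PGame :=
  ⟨@Sym2.GameAdd.recursion PGame IsOption (fun _ _ => Prop) wf_isOption fun x y le =>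
      (∀ i, ¬le y (x.moveLeft i) (Sym2.GameAdd.snd_fst <| IsOption.moveLeft i)) ∧
        ∀ j, ¬le (y.moveRight j) x (Sym2.GameAdd.fst_snd <| IsOption.moveRight j)⟩

def neg : PGame → PGame
  | mk l r L R => mk r l (fun i => neg (R i)) fun i => neg (L i)

instance : Neg PGame :=
  ⟨neg⟩

def Equiv (x y : PGame) : Prop :=
  x ≤ y ∧ y ≤ x

instance : HasEquiv PGame :=
  ⟨Equiv⟩

def ImpartialAux : PGame → Prop
  | G@(mk _ _ L R) => (G ≈ -G) ∧ (∀ i, ImpartialAux (L i)) ∧ ∀ j, ImpartialAux (R j)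

class Impartial (G : PGame) : Prop where
  out : ImpartialAux G

end SetTheory.PGame

/-- Nimbers (removed from Mathlib): a type synonym for `Ordinal`, with its order. -/
def Nimber : Type (u + 1) :=
  Ordinal.{u}

namespace Nimber

noncomputable instance : ConditionallyCompleteLinearOrderBot Nimber :=
  inferInstanceAs (ConditionallyCompleteLinearOrderBot Ordinal)

instance : WellFoundedRelation Nimber :=
  inferInstanceAs (WellFoundedRelation Ordinal)

end Nimber

namespace SetTheory.PGame

/-- The Grundy value of a game (December 2024 definition): the mex of the options' values. -/
noncomputable def grundyValue : PGame.{u} → Nimber.{u}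
  | mk _ _ L _ => sInf (Set.range fun i => grundyValue (L i))ᶜ

end SetTheory.PGame

open SetTheory PGame Nimber

/-- The ordinal sum `G : H` of games: its options are `G : H'` for options `H'` of `H`,
and `G'` for options `G'` of `G` (discarding `H`). -/
def osum (G : PGame) : PGame → PGame
  | PGame.mk l r L R =>
    PGame.mk (G.LeftMoves ⊕ l) (G.RightMoves ⊕ r)
      (Sum.elim G.moveLeft fun j => osum G (L j))
      (Sum.elim G.moveRight fun j => osum G (R j))

/-- The Grundy set `Γ₁(G)`: the set of Grundy numbers of the options of `G`. -/
def grundySet (G : PGame) : Set Nimber :=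
  Set.range fun i => grundyValue (G.moveLeft i)

/-- The ρ-th excluded ordinal of a set `Λ`:
`ex_ρ(Λ) = mex (Λ ∪ { ex_μ(Λ) | μ < ρ })`, where `mex` is the minimal excludant
(least element of the complement). -/
noncomputable def exc (Λ : Set Nimber) : Nimber → Nimber := fun ρ =>
  sInf {a | a ∉ Λ ∧ ∀ μ < ρ, exc Λ μ ≠ a}
termination_by ρ => ρ

/-!
Write `Λ = Γ₁(X)`. By induction on `G`, `Γ₀(X : G) = ex_{Γ₀(G)}(Λ)`: the options of `X : G`
have the values in `Λ` together with `ex_{Γ₀(G')}(Λ)` for the options `G'` of `G`, and since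
`ρ ↦ ex_ρ(Λ)` is strictly increasing and avoids `Λ`, the mex of `Λ ∪ {ex_σ(Λ) | σ ∈ S}` is
`ex_{mex S}(Λ)`. So `Γ₀(X : G)` depends on `G` only through `Γ₀(G)`.
-/

universe v

namespace Nimber

instance wellFoundedLT : WellFoundedLT Nimber.{u} :=
  inferInstanceAs (WellFoundedLT Ordinal.{u})

instance small_Iio (o : Nimber.{u}) : Small.{u} (Set.Iio o) :=
  Ordinal.small_Iio (o : Ordinal.{u})

noncomputable def mex (s : Set Nimber.{u}) : Nimber.{u} :=
  sInf sᶜ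

theorem nonempty_compl_of_small (s : Set Nimber.{u}) [Small.{u} s] : sᶜ.Nonempty :=
  nonempty_of_not_bddAbove (@Ordinal.not_bddAbove_compl_of_small (s : Set Ordinal.{u}) ‹_›)

theorem mex_notMem (s : Set Nimber.{u}) [Small.{u} s] : mex s ∉ s :=
  csInf_mem (nonempty_compl_of_small s)

theorem mem_of_lt_mex {s : Set Nimber.{u}} {a : Nimber.{u}} (ha : a < mex s) : a ∈ s :=
  not_not.1 (notMem_of_lt_csInf' ha)

theorem mex_le_of_notMem {s : Set Nimber.{u}} {b : Nimber.{u}} (hb : b ∉ s) : mex s ≤ b :=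
  csInf_le' hb

theorem mex_eq_of_notMem_of_forall_lt_mem {s : Set Nimber.{u}} {b : Nimber.{u}} (hb : b ∉ s)
    (hlt : ∀ a < b, a ∈ s) : mex s = b :=
  IsLeast.csInf_eq ⟨hb, fun _ ha => not_lt.1 fun h => ha (hlt _ h)⟩

end Nimber

section exc

theorem exc_eq_mex (Λ : Set Nimber.{max u v}) (ρ : Nimber.{u}) :
    exc Λ ρ = mex (Λ ∪ exc Λ '' Set.Iio ρ) := by
  rw [exc, mex]
  congr 1
  ext a
  simp

variable (Λ : Set Nimber.{max u v}) [Small.{max u v} Λ]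

instance small_union_image_exc (S : Set Nimber.{u}) [Small.{u} S] :
    Small.{max u v} ↥(Λ ∪ exc Λ '' S) :=
  have : Small.{max u v} (exc Λ '' S) := small_lift _
  small_union _ _

theorem exc_notMem_union_image_Iio (ρ : Nimber.{u}) : exc Λ ρ ∉ Λ ∪ exc Λ '' Set.Iio ρ := by
  rw [exc_eq_mex]
  exact mex_notMem _

theorem exc_strictMono : StrictMono fun ρ : Nimber.{u} => exc Λ ρ := fun μ ρ hμρ => by
  have hρ := exc_notMem_union_image_Iio Λ ρ
  refine lt_of_le_of_ne ?_ fun h => hρ (Or.inr ⟨μ, hμρ, h⟩)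
  change exc Λ μ ≤ exc Λ ρ
  rw [exc_eq_mex Λ μ]
  refine mex_le_of_notMem fun hmem => hρ ?_
  exact Set.union_subset_union_right Λ (Set.image_mono (Set.Iio_subset_Iio hμρ.le)) hmem

theorem mex_union_image_exc (S : Set Nimber.{u}) [Small.{u} S] :
    mex (Λ ∪ exc Λ '' S) = exc Λ (mex S) := by
  refine mex_eq_of_notMem_of_forall_lt_mem ?_ fun a ha => ?_
  · rintro (hΛ | ⟨σ, hσ, heq⟩)
    · exact (exc_notMem_union_image_Iio Λ _) (Or.inl hΛ)
    · exact mex_notMem S ((exc_strictMono Λ).injective heq ▸ hσ)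
  · rw [exc_eq_mex] at ha
    rcases mem_of_lt_mex ha with hΛ | ⟨μ, hμ, rfl⟩
    · exact Or.inl hΛ
    · exact Or.inr ⟨μ, mem_of_lt_mex hμ, rfl⟩

end exc

namespace SetTheory.PGame

theorem grundyValue_eq_mex_grundySet (G : PGame.{u}) : grundyValue G = mex (grundySet G) := by
  cases G
  rfl

instance small_grundySet (G : PGame.{u}) : Small.{u} (grundySet G) :=
  small_range _

theorem grundySet_osum_mk (X : PGame.{max u v}) {l r : Type u} (L : l → PGame.{u})
    (R : r → PGame.{u}) :
    grundySet (osum X (mk l r L R)) =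
      grundySet X ∪ Set.range fun j => grundyValue (osum X (L j)) := by
  change Set.range (grundyValue ∘ Sum.elim X.moveLeft fun j => osum X (L j)) = _
  rw [Sum.comp_elim, Set.Sum.elim_range]
  rfl

theorem grundyValue_osum (X : PGame.{max u v}) (G : PGame.{u}) :
    grundyValue (osum X G) = exc (grundySet X) (grundyValue G) := by
  induction G with
  | mk l r L R ih =>
    have hset : grundySet (osum X (mk l r L R)) =
        grundySet X ∪ exc (grundySet X) '' grundySet (mk l r L R) := by
      rw [grundySet_osum_mk]
      simp only [ih]
      congr 1
      exact Set.range_comp _ _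
    rw [grundyValue_eq_mex_grundySet, hset, mex_union_image_exc, ← grundyValue_eq_mex_grundySet]

end SetTheory.PGame

theorem grundyValue_osum_congr_right_general (G H : PGame)
    (h : grundyValue G = grundyValue H) :
    ∀ X : PGame, X.Impartial → grundyValue (osum X G) = grundyValue (osum X H) := by
  intro X _
  rw [grundyValue_osum X G, grundyValue_osum X H, h]

/-- colon principle: if `Γ₀(G) = Γ₀(H)` then
`Γ₀(X : G) = Γ₀(X : H)` for every terminating impartial game `X`. -/
theorem grundyValue_osum_congr_right (G H : PGame) [G.Impartial] [H.Impartial]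
    (h : grundyValue G = grundyValue H) :
    ∀ X : PGame, X.Impartial → grundyValue (osum X G) = grundyValue (osum X H) :=
  grundyValue_osum_congr_right_general G H h
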